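/- Let K = T ∪ A be a DL-Lite_FR KB and let I1, I2 be interpretations with disjoint support sets such that the support set of I2 is disjoint from the set of constants occurring in K. Then I1 ⊎ I2 is a model of K if and only if I1 is a model of K and I2 is a model of T. -/

import Mathlib

namespace DLLite

/-- The countably infinite domain of constants. -/
abbrev Δ : Type := ℕ
/-- Countably infinite set of concept names. -/
abbrev ConceptName : Type := ℕ
/-- Countably infinite set of role names. -/
abbrev RoleName : Type := ℕ

/-- An interpretation assigns a set of domain elements to each concept name
and a binary relation to each role name; constants are interpreted as themselves. -/
structure Interp where
  concept : ConceptName → Set Δ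
  role : RoleName → Set (Δ × Δ)

/-- Basic roles: `P` or `P⁻`. -/
inductive BasicRole where
  | pos (P : RoleName)
  | inv (P : RoleName)
deriving DecidableEq

def BasicRole.interp (R : BasicRole) (I : Interp) : Set (Δ × Δ) :=
  match R with
  | .pos P => I.role P
  | .inv P => {p | (p.2, p.1) ∈ I.role P}

/-- Basic concepts: `A` or `∃R`. -/
inductive BasicConcept where
  | atom (A : ConceptName)
  | ex (R : BasicRole)
deriving DecidableEq

def BasicConcept.interp (B : BasicConcept) (I : Interp) : Set Δ :=
  match B with
  | .atom A => I.concept A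
  | .ex R => {o | ∃ o', (o, o') ∈ R.interp I}

/-- DL-Lite_FR assertions: (negative) concept/role inclusions, functionality
assertions, and membership assertions. -/
inductive Assertion where
  | conceptIncl (B1 B2 : BasicConcept)
  | conceptDisj (B1 B2 : BasicConcept)
  | roleIncl (R1 R2 : BasicRole)
  | roleDisj (R1 R2 : BasicRole)
  | funct (R : BasicRole)
  | memberC (A : ConceptName) (a : Δ)
  | memberR (P : RoleName) (a b : Δ)
deriving DecidableEq

/-- Satisfaction of an assertion by an interpretation. -/
def Interp.sat (I : Interp) : Assertion → Prop
  | .conceptIncl B1 B2 => B1.interp I ⊆ B2.interp I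
  | .conceptDisj B1 B2 => B1.interp I ∩ B2.interp I = ∅
  | .roleIncl R1 R2 => R1.interp I ⊆ R2.interp I
  | .roleDisj R1 R2 => R1.interp I ∩ R2.interp I = ∅
  | .funct R => ∀ o o1 o2, (o, o1) ∈ R.interp I → (o, o2) ∈ R.interp I → o1 = o2
  | .memberC A a => a ∈ I.concept A
  | .memberR P a b => (a, b) ∈ I.role P

/-- TBox assertions: inclusion or functionality assertions. -/
def Assertion.isTBox : Assertion → Prop
  | .memberC _ _ => False
  | .memberR _ _ _ => False
  | _ => True

/-- Membership (ABox) assertions. -/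
def Assertion.isMembership : Assertion → Prop
  | .memberC _ _ => True
  | .memberR _ _ _ => True
  | _ => False

/-- The constants occurring in an assertion. -/
def Assertion.constants : Assertion → Set Δ
  | .memberC _ a => {a}
  | .memberR _ a b => {a, b}
  | _ => ∅

/-- A knowledge base: a finite set of assertions (TBox ∪ ABox). -/
abbrev KB := Finset Assertion

/-- The set of models of a KB. -/
def Mod (K : KB) : Set Interp := {I | ∀ a ∈ K, I.sat a}

/-- Interpretations falsifying at least one assertion of `K`. -/
def NonMod (K : KB) : Set Interp := {I | ∃ a ∈ K, ¬ I.sat a}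

/-- The constants occurring in a KB. -/
def KB.constants (K : KB) : Set Δ := ⋃ a ∈ K, Assertion.constants a

/-- Atoms: ground facts `A(o)` or `P(o,o')`. -/
inductive Atom where
  | c (A : ConceptName) (o : Δ)
  | r (P : RoleName) (o o' : Δ)
deriving DecidableEq

/-- The atom set of an interpretation. -/
def Interp.atoms (I : Interp) : Set Atom :=
  fun a => match a with
  | .c A o => o ∈ I.concept A
  | .r P o o' => (o, o') ∈ I.role P

/-- Concept or role names (symbols). -/
inductive SName where
  | c (A : ConceptName)
  | r (P : RoleName)
deriving DecidableEq

/-- Atom-based set distance: symmetric difference of atom sets. -/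
def distASub (I J : Interp) : Set Atom := symmDiff I.atoms J.atoms
/-- Atom-based cardinality distance. -/
noncomputable def distACard (I J : Interp) : ℕ∞ := (symmDiff I.atoms J.atoms).encard
/-- Symbol-based set distance: names interpreted differently. -/
def distSSub (I J : Interp) : Set SName :=
  fun n => match n with
  | .c A => I.concept A ≠ J.concept A
  | .r P => I.role P ≠ J.role P
/-- Symbol-based cardinality distance. -/
noncomputable def distSCard (I J : Interp) : ℕ∞ := (distSSub I J).encard

/-- Global expansion w.r.t. a distance. -/
def expGlobD {D : Type} [PartialOrder D] (dist : Interp → Interp → D)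
    (M N : Set Interp) : Set Interp :=
  {J | J ∈ N ∧ ∃ I ∈ M, ∀ I' ∈ M, ∀ J' ∈ N, ¬ dist I' J' < dist I J}

/-- Local expansion w.r.t. a distance. -/
def expLocD {D : Type} [PartialOrder D] (dist : Interp → Interp → D)
    (M N : Set Interp) : Set Interp :=
  {J | J ∈ N ∧ ∃ I ∈ M, ∀ J' ∈ N, ¬ dist I J' < dist I J}

inductive LocKind | glob | loc
inductive MeasKind | atoms | symbols
inductive OrdKind | subset | card

/-- The expansion operator on sets of interpretations for each of the
eight model-based semantics `X^y_z`. -/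
def expansionSet : LocKind → MeasKind → OrdKind → Set Interp → Set Interp → Set Interp
  | .glob, .atoms, .subset => expGlobD distASub
  | .glob, .atoms, .card => expGlobD distACard
  | .glob, .symbols, .subset => expGlobD distSSub
  | .glob, .symbols, .card => expGlobD distSCard
  | .loc, .atoms, .subset => expLocD distASub
  | .loc, .atoms, .card => expLocD distACard
  | .loc, .symbols, .subset => expLocD distSSub
  | .loc, .symbols, .card => expLocD distSCard

/-- KB expansion `K ⊕ N` under semantics `X^y_z`. -/
def expandKB (X : LocKind) (y : MeasKind) (z : OrdKind) (K N : KB) : Set Interp :=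
  expansionSet X y z (Mod K) (Mod N)

/-- KB contraction `K ⊖ N` under semantics `X^y_z`. -/
def contractKB (X : LocKind) (y : MeasKind) (z : OrdKind) (K N : KB) : Set Interp :=
  Mod K ∪ expansionSet X y z (Mod K) (NonMod N)

/-- Union of two interpretations. -/
def Interp.union (I1 I2 : Interp) : Interp :=
  ⟨fun A => I1.concept A ∪ I2.concept A, fun P => I1.role P ∪ I2.role P⟩

/-- The support set of an interpretation. -/
def Interp.support (I : Interp) : Set Δ :=
  (⋃ A, I.concept A) ∪ (⋃ P, {o | ∃ o', (o, o') ∈ I.role P ∨ (o', o) ∈ I.role P})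

/-- The image `I^f` of an interpretation under an (injective) map `f`. -/
def Interp.image (I : Interp) (f : Δ → Δ) : Interp :=
  ⟨fun A => f '' I.concept A, fun P => (fun p => (f p.1, f p.2)) '' I.role P⟩

/-- `h` is a homomorphism from `I` to `J`. -/
def IsHom (h : Δ → Δ) (I J : Interp) : Prop :=
  (∀ A, h '' I.concept A ⊆ J.concept A) ∧
  (∀ P o o', (o, o') ∈ I.role P → (h o, h o') ∈ J.role P)

end DLLite

/-!
Every TBox assertion constrains a single basic concept or role on each side, and the extension
of a basic concept or role in `I1 ⊎ I2` is the disjoint union of its extensions in `I1` and in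
`I2`; since no element of `I1` is related to one of `I2`, each inclusion, disjointness or
functionality constraint holds in `I1 ⊎ I2` iff it holds in both parts. A membership assertion
only mentions constants of the KB, which lie outside the support of `I2`, so it holds in
`I1 ⊎ I2` iff it holds in `I1`.
-/

section UnionLemmas

variable {α β : Type*}

theorem Set.union_subset_union_iff_of_disjoint {s₁ s₂ t₁ t₂ : Set α}
    (h₁ : Disjoint s₁ t₂) (h₂ : Disjoint s₂ t₁) :
    s₁ ∪ s₂ ⊆ t₁ ∪ t₂ ↔ s₁ ⊆ t₁ ∧ s₂ ⊆ t₂ := by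
  refine ⟨fun h => ⟨?_, ?_⟩, fun h => Set.union_subset_union h.1 h.2⟩
  · exact h₁.subset_left_of_subset_union (Set.union_subset_iff.1 h).1
  · exact h₂.subset_right_of_subset_union (Set.union_subset_iff.1 h).2

theorem Set.union_inter_union_eq_empty_iff_of_disjoint {s₁ s₂ t₁ t₂ : Set α}
    (h₁ : Disjoint s₁ t₂) (h₂ : Disjoint s₂ t₁) :
    (s₁ ∪ s₂) ∩ (t₁ ∪ t₂) = ∅ ↔ s₁ ∩ t₁ = ∅ ∧ s₂ ∩ t₂ = ∅ := by
  simp only [← Set.disjoint_iff_inter_eq_empty, Set.disjoint_union_left,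
    Set.disjoint_union_right]
  tauto

theorem Set.functional_union_iff_of_disjoint_fst {r₁ r₂ : Set (α × β)}
    (h : Disjoint (Prod.fst '' r₁) (Prod.fst '' r₂)) :
    (∀ a b₁ b₂, (a, b₁) ∈ r₁ ∪ r₂ → (a, b₂) ∈ r₁ ∪ r₂ → b₁ = b₂) ↔
      (∀ a b₁ b₂, (a, b₁) ∈ r₁ → (a, b₂) ∈ r₁ → b₁ = b₂) ∧
      (∀ a b₁ b₂, (a, b₁) ∈ r₂ → (a, b₂) ∈ r₂ → b₁ = b₂) := by
  have hne : ∀ {a b₁ b₂}, (a, b₁) ∈ r₁ → (a, b₂) ∈ r₂ → False := fun h₁ h₂ =>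
    h.ne_of_mem (Set.mem_image_of_mem Prod.fst h₁) (Set.mem_image_of_mem Prod.fst h₂) rfl
  refine ⟨fun hf => ⟨fun a b₁ b₂ h₁ h₂ => hf a b₁ b₂ (.inl h₁) (.inl h₂),
    fun a b₁ b₂ h₁ h₂ => hf a b₁ b₂ (.inr h₁) (.inr h₂)⟩, ?_⟩
  rintro ⟨hf₁, hf₂⟩ a b₁ b₂ (h₁ | h₁) (h₂ | h₂)
  · exact hf₁ a b₁ b₂ h₁ h₂
  · exact (hne h₁ h₂).elim
  · exact (hne h₂ h₁).elim
  · exact hf₂ a b₁ b₂ h₁ h₂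

end UnionLemmas

namespace DLLite

@[simp]
theorem BasicRole.interp_union (R : BasicRole) (I₁ I₂ : Interp) :
    R.interp (I₁.union I₂) = R.interp I₁ ∪ R.interp I₂ := by
  cases R <;> rfl

@[simp]
theorem BasicConcept.interp_union (B : BasicConcept) (I₁ I₂ : Interp) :
    B.interp (I₁.union I₂) = B.interp I₁ ∪ B.interp I₂ := by
  cases B with
  | atom A => rfl
  | ex R =>
    ext o
    simp only [BasicConcept.interp, BasicRole.interp_union, Set.mem_union, exists_or]
    rfl

theorem BasicRole.interp_subset_support (R : BasicRole) (I : Interp) :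
    R.interp I ⊆ I.support ×ˢ I.support := by
  rintro ⟨o, o'⟩ h
  cases R with
  | pos P =>
    exact ⟨.inr (Set.mem_iUnion.2 ⟨P, o', .inl h⟩), .inr (Set.mem_iUnion.2 ⟨P, o, .inr h⟩)⟩
  | inv P =>
    exact ⟨.inr (Set.mem_iUnion.2 ⟨P, o', .inr h⟩), .inr (Set.mem_iUnion.2 ⟨P, o, .inl h⟩)⟩

theorem BasicRole.fst_image_interp_subset_support (R : BasicRole) (I : Interp) :
    Prod.fst '' R.interp I ⊆ I.support :=
  (Set.image_mono (R.interp_subset_support I)).trans (Set.fst_image_prod_subset _ _)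

theorem BasicConcept.interp_subset_support (B : BasicConcept) (I : Interp) :
    B.interp I ⊆ I.support := by
  cases B with
  | atom A => exact fun o h => .inl (Set.mem_iUnion.2 ⟨A, h⟩)
  | ex R => exact fun o ⟨o', h⟩ => (R.interp_subset_support I h).1

theorem BasicConcept.disjoint_interp {I₁ I₂ : Interp}
    (hdisj : Disjoint I₁.support I₂.support) (B B' : BasicConcept) :
    Disjoint (B.interp I₁) (B'.interp I₂) :=
  hdisj.mono (B.interp_subset_support I₁) (B'.interp_subset_support I₂)

theorem BasicRole.disjoint_interp {I₁ I₂ : Interp}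
    (hdisj : Disjoint I₁.support I₂.support) (R R' : BasicRole) :
    Disjoint (R.interp I₁) (R'.interp I₂) :=
  (Set.disjoint_prod.2 (.inl hdisj)).mono (R.interp_subset_support I₁)
    (R'.interp_subset_support I₂)

theorem Interp.sat_union_iff_of_isTBox {I₁ I₂ : Interp}
    (hdisj : Disjoint I₁.support I₂.support) {a : Assertion} (ha : a.isTBox) :
    (I₁.union I₂).sat a ↔ I₁.sat a ∧ I₂.sat a := by
  cases a with
  | conceptIncl B₁ B₂ =>
    simp only [Interp.sat, BasicConcept.interp_union]
    exact Set.union_subset_union_iff_of_disjoint (B₁.disjoint_interp hdisj B₂)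
      (B₂.disjoint_interp hdisj B₁).symm
  | conceptDisj B₁ B₂ =>
    simp only [Interp.sat, BasicConcept.interp_union]
    exact Set.union_inter_union_eq_empty_iff_of_disjoint (B₁.disjoint_interp hdisj B₂)
      (B₂.disjoint_interp hdisj B₁).symm
  | roleIncl R₁ R₂ =>
    simp only [Interp.sat, BasicRole.interp_union]
    exact Set.union_subset_union_iff_of_disjoint (R₁.disjoint_interp hdisj R₂)
      (R₂.disjoint_interp hdisj R₁).symm
  | roleDisj R₁ R₂ =>
    simp only [Interp.sat, BasicRole.interp_union]
    exact Set.union_inter_union_eq_empty_iff_of_disjoint (R₁.disjoint_interp hdisj R₂)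
      (R₂.disjoint_interp hdisj R₁).symm
  | funct R =>
    simp only [Interp.sat, BasicRole.interp_union]
    exact Set.functional_union_iff_of_disjoint_fst (hdisj.mono
      (R.fst_image_interp_subset_support I₁) (R.fst_image_interp_subset_support I₂))
  | memberC | memberR => exact ha.elim

theorem Interp.sat_union_iff_of_isMembership {a : Assertion} (ha : a.isMembership)
    {I₁ I₂ : Interp} (hc : Disjoint I₂.support a.constants) :
    (I₁.union I₂).sat a ↔ I₁.sat a := by
  cases a with
  | memberC A c =>
    exact or_iff_left fun h => hc.ne_of_mem
      ((BasicConcept.atom A).interp_subset_support I₂ h) (Set.mem_singleton c) rfl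
  | memberR P c d =>
    exact or_iff_left fun h => hc.ne_of_mem
      ((BasicRole.pos P).interp_subset_support I₂ h).1 (Set.mem_insert c {d}) rfl
  | conceptIncl | conceptDisj | roleIncl | roleDisj | funct => exact ha.elim

theorem Assertion.constants_subset_constants {a : Assertion} {K : KB} (ha : a ∈ K) :
    a.constants ⊆ K.constants :=
  Set.subset_biUnion_of_mem (u := Assertion.constants) (Finset.mem_coe.2 ha)

theorem KB.constants_mono {K L : KB} (h : K ⊆ L) : K.constants ⊆ L.constants :=
  Set.biUnion_mono (Finset.coe_subset.2 h) fun _ _ => subset_rfl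

theorem mem_Mod_union {K L : KB} {I : Interp} : I ∈ Mod (K ∪ L) ↔ I ∈ Mod K ∧ I ∈ Mod L :=
  Finset.forall_mem_union

theorem union_mem_Mod_iff_of_isTBox {T : KB} (hT : ∀ a ∈ T, a.isTBox) {I₁ I₂ : Interp}
    (hdisj : Disjoint I₁.support I₂.support) :
    I₁.union I₂ ∈ Mod T ↔ I₁ ∈ Mod T ∧ I₂ ∈ Mod T :=
  (forall₂_congr fun a ha => Interp.sat_union_iff_of_isTBox hdisj (hT a ha)).trans
    forall₂_and

theorem union_mem_Mod_iff_of_isMembership {A : KB} (hA : ∀ a ∈ A, a.isMembership)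
    {I₁ I₂ : Interp} (hc : Disjoint I₂.support (KB.constants A)) :
    I₁.union I₂ ∈ Mod A ↔ I₁ ∈ Mod A :=
  forall₂_congr fun a ha => Interp.sat_union_iff_of_isMembership (hA a ha)
    (hc.mono_right (Assertion.constants_subset_constants ha))

/-- For a KB `K = T ∪ A` and interpretations with disjoint support sets,
where the support of `I2` avoids the constants of `K`:
`I1 ⊎ I2` is a model of `K` iff `I1` is a model of `K` and `I2` is a model
of `T`. -/
theorem disjoint_union_model_kb (T A : Finset Assertion)
    (hT : ∀ a ∈ T, a.isTBox) (hA : ∀ a ∈ A, a.isMembership)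
    (I1 I2 : Interp) (hdisj : Disjoint I1.support I2.support)
    (hc : Disjoint I2.support (KB.constants (T ∪ A))) :
    I1.union I2 ∈ Mod (T ∪ A) ↔ I1 ∈ Mod (T ∪ A) ∧ I2 ∈ Mod T := by
  have hcA : Disjoint I2.support (KB.constants A) :=
    hc.mono_right (KB.constants_mono Finset.subset_union_right)
  rw [mem_Mod_union, mem_Mod_union, union_mem_Mod_iff_of_isTBox hT hdisj,
    union_mem_Mod_iff_of_isMembership hA hcA]
  tauto

end DLLite
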